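/- arXiv:2002.11715 — 5 statements merged into one kernel-verified Lean document; each statement's English description precedes it below -/
import Mathlib

section
/- Let A be a symmetric tensor of order m and dimension n over ℂ, and let D be an invertible diagonal matrix with d₁₁ = 1 satisfying D^{-(m-1)} A D = A. If the support hypergraph of A is connected (A is weakly irreducible), then D^m = I. -/
/-!
Write `D = diag(d)`. If `A f ≠ 0`, the invariance `D^{-(m-1)} A D = A` at `f` says that the
entries of `d` at the positions of `f` other than the first multiply to `d (f 0) ^ (m - 1)`, so
`∏ₜ d (f t) = d (f 0) ^ m`. By symmetry of `A` any index occurring in `f` can be moved to the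
first position, hence `d i ^ m` is the same for all indices `i` of a nonzero entry. Along the
connecting paths of the support hypergraph all `d i ^ m` therefore agree with `d 0 ^ m = 1`.
-/

open Matrix Finset

theorem Matrix.IsDiag.isUnit_apply_of_isUnit_det {n R : Type*} [Fintype n] [DecidableEq n]
    [CommRing R] {D : Matrix n n R} (hD : D.IsDiag) (hdet : IsUnit D.det) (i : n) :
    IsUnit (D i i) := by
  rw [← hD.diagonal_diag, det_diagonal, IsUnit.prod_univ_iff] at hdet
  exact hdet i

section DiagonalScaling

variable {K ι : Type*} [Field K] {m : ℕ} {A : (Fin m → ι) → K} {d : ι → K} {z : Fin m}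

theorem prod_eq_pow_of_diagonal_scaling_fixed {f : Fin m → ι} (hf : A f ≠ 0)
    (hdz : d (f z) ≠ 0)
    (hact : (d (f z))⁻¹ ^ (m - 1) * A f * ∏ t ∈ univ.erase z, d (f t) = A f) :
    ∏ t, d (f t) = d (f z) ^ m := by
  have hrest : ∏ t ∈ univ.erase z, d (f t) = d (f z) ^ (m - 1) := by
    have hpow : d (f z) ^ (m - 1) ≠ 0 := pow_ne_zero _ hdz
    rw [inv_pow] at hact
    field_simp at hact
    exact hact
  calc ∏ t, d (f t) = d (f z) * ∏ t ∈ univ.erase z, d (f t) :=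
        (mul_prod_erase _ _ (mem_univ z)).symm
    _ = d (f z) ^ m := by rw [hrest, ← pow_succ', Nat.sub_add_cancel z.pos]

variable (hsym : ∀ (f : Fin m → ι) (σ : Equiv.Perm (Fin m)), A (f ∘ σ) = A f)
  (hd : ∀ i, d i ≠ 0)
  (hact : ∀ f : Fin m → ι,
    (d (f z))⁻¹ ^ (m - 1) * A f * ∏ t ∈ univ.erase z, d (f t) = A f)
include hsym hd hact

theorem pow_eq_prod_of_mem_range {f : Fin m → ι} (hf : A f ≠ 0) {i : ι}
    (hi : i ∈ Set.range f) : d i ^ m = ∏ t, d (f t) := by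
  obtain ⟨t, rfl⟩ := hi
  let σ := Equiv.swap z t
  have hσ : (f ∘ σ) z = f t := by simp [σ]
  calc d (f t) ^ m = ∏ s, d ((f ∘ σ) s) := by
        rw [← hσ]
        exact (prod_eq_pow_of_diagonal_scaling_fixed (by rwa [hsym]) (hd _) (hact _)).symm
    _ = ∏ s, d (f s) := Equiv.prod_comp σ (fun s => d (f s))

theorem pow_eq_pow_of_reflTransGen {i j : ι} (hij : Relation.ReflTransGen
      (fun a b => a ≠ b ∧ ∃ f, A f ≠ 0 ∧ a ∈ Set.range f ∧ b ∈ Set.range f) i j) :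
    d i ^ m = d j ^ m := by
  have hpath := hij.lift (p := Eq) (fun k => d k ^ m) fun a b ⟨_, f, hf, ha, hb⟩ => by
    rw [Function.onFun, pow_eq_prod_of_mem_range hsym hd hact hf ha,
      pow_eq_prod_of_mem_range hsym hd hact hf hb]
  rwa [Relation.reflTransGen_eq_self] at hpath

end DiagonalScaling

/-- For a symmetric weakly irreducible tensor `A` of order `m` and dimension `n` over `ℂ`,
any invertible diagonal matrix `D` with `D₁₁ = 1` satisfying `D^{-(m-1)} A D = A`
satisfies `D^m = I`. -/
theorem diag_pow_eq_one_of_symmetric_weakly_irreducible (m n : ℕ) (hm : 2 ≤ m) (hn : 1 ≤ n)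
    (A : (Fin m → Fin n) → ℂ)
    (hsym : ∀ (f : Fin m → Fin n) (σ : Equiv.Perm (Fin m)), A (f ∘ σ) = A f)
    (hirr : ∀ i j : Fin n, Relation.ReflTransGen
      (fun a b => a ≠ b ∧ ∃ f, A f ≠ 0 ∧ a ∈ Set.range f ∧ b ∈ Set.range f) i j)
    (D : Matrix (Fin n) (Fin n) ℂ)
    (hdiag : D.IsDiag) (hunit : IsUnit D.det)
    (hnorm : D ⟨0, by omega⟩ ⟨0, by omega⟩ = 1)
    (hact : ∀ f : Fin m → Fin n,
      (D (f ⟨0, by omega⟩) (f ⟨0, by omega⟩))⁻¹ ^ (m - 1) * A f *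
        ∏ t ∈ Finset.univ.erase (⟨0, by omega⟩ : Fin m), D (f t) (f t) = A f) :
    D ^ m = 1 := by
  have hd : ∀ i, D i i ≠ 0 := fun i => (hdiag.isUnit_apply_of_isUnit_det hunit i).ne_zero
  have hpow : ∀ i, D i i ^ m = 1 := fun i => by
    rw [pow_eq_pow_of_reflTransGen (d := fun k => D k k) hsym hd hact (hirr i ⟨0, by omega⟩),
      hnorm, one_pow]
  rw [← hdiag.diagonal_diag, diagonal_pow, ← diagonal_one]
  exact congrArg diagonal (funext hpow)
end

section
/- Let G₁ and G₂ be nontrivial connected m-uniform hypergraphs and G = G₁(u) ⊙ G₂(u) their coalescence at a vertex u. Then s(G) = s(G₁) · s(G₂), where for a connected m-uniform hypergraph H on n_H vertices with incidence matrix over ℤ/mℤ having invariant divisors d₁,...,d_r, the stabilizing index is s(H) = m^{n_H − 1 − r} ∏_{i=1}^r dᵢ. -/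
open Matrix

/-- An `m`-uniform hypergraph on the vertex type `V`. -/
structure HG (m : ℕ) (V : Type) where
  edges : Finset (Finset V)
  uniform : ∀ e ∈ edges, e.card = m

namespace HG

variable {m : ℕ} {V : Type}

/-- Two vertices are adjacent if they are distinct and some edge contains both. -/
def adj (G : HG m V) (u v : V) : Prop :=
  u ≠ v ∧ ∃ e ∈ G.edges, u ∈ e ∧ v ∈ e

/-- A hypergraph is connected if every two vertices are joined by a walk. -/
def Connected (G : HG m V) : Prop :=
  ∀ u v : V, Relation.ReflTransGen G.adj u v

/-- The incidence matrix of `G` over `ZMod m`: rows are edges, columns are vertices,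
entry `1` iff the vertex lies in the edge. -/
def inc [DecidableEq V] (G : HG m V) : Matrix {e // e ∈ G.edges} V (ZMod m) :=
  Matrix.of fun e v => if v ∈ e.1 then 1 else 0

/-- The stabilizing index of `G` with respect to a base vertex `v₀`: the number of
solutions `x` of `In(G)·x = 0` over `ZMod m` with `x v₀ = 0`. -/
noncomputable def stabIndex [DecidableEq V] [Fintype V] (G : HG m V) (v₀ : V) : ℕ :=
  Nat.card {x : V → ZMod m // G.inc.mulVec x = 0 ∧ x v₀ = 0}

/-- The cyclic index of `G`: the largest divisor `ℓ` of `m` such that `G` has an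
`(m,ℓ)`-coloring, i.e. a vertex labelling whose sum on each edge is `m/ℓ` mod `m`. -/
noncomputable def cyclicIndex (G : HG m V) : ℕ :=
  sSup {ℓ : ℕ | ℓ ∣ m ∧ ∃ x : V → ZMod m, ∀ e ∈ G.edges, ∑ v ∈ e, x v = ((m / ℓ : ℕ) : ZMod m)}

end HG

/-- The vertex identification map used in the coalescence. -/
def coalMap {V₁ V₂ : Type} [DecidableEq V₂] (u₁ : V₁) (u₂ : V₂) :
    V₂ → V₁ ⊕ {v : V₂ // v ≠ u₂} :=
  fun v => if h : v = u₂ then Sum.inl u₁ else Sum.inr ⟨v, h⟩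

lemma coalMap_injective {V₁ V₂ : Type} [DecidableEq V₂] (u₁ : V₁) (u₂ : V₂) :
    Function.Injective (coalMap u₁ u₂) := by
  intro a b hab
  unfold coalMap at hab
  split_ifs at hab <;> simp_all

/-- The coalescence `G₁(u₁) ⊙ G₂(u₂)`: the vertex `u₁` of `G₁` is identified with the
vertex `u₂` of `G₂`, and the edge set is the disjoint union of the two edge sets. -/
def coalescence {m : ℕ} {V₁ V₂ : Type} [DecidableEq V₁] [DecidableEq V₂]
    (G₁ : HG m V₁) (G₂ : HG m V₂) (u₁ : V₁) (u₂ : V₂) :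
    HG m (V₁ ⊕ {v : V₂ // v ≠ u₂}) where
  edges := G₁.edges.image (Finset.image Sum.inl) ∪
    G₂.edges.image (Finset.image (coalMap u₁ u₂))
  uniform := by
    intro e he
    simp only [Finset.mem_union, Finset.mem_image] at he
    rcases he with ⟨f, hf, rfl⟩ | ⟨f, hf, rfl⟩
    · rw [Finset.card_image_of_injective _ Sum.inl_injective]
      exact G₁.uniform f hf
    · rw [Finset.card_image_of_injective _ (coalMap_injective u₁ u₂)]
      exact G₂.uniform f hf

/-!
Every edge has exactly `m` vertices, so constant labellings solve `In(G) x = 0`; hence evaluation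
at any vertex maps the solution group `Sol(G)` onto `ℤ/mℤ`, with kernel the set counted by `s(G)`,
and `|Sol(G)| = m · s(G)` whatever the base vertex. A solution on the coalescence is the same as a
pair of solutions on `G₁` and `G₂` that agree at the identified vertex, and the difference of their
values there again maps onto `ℤ/mℤ`, so `m · |Sol(G₁ ⊙ G₂)| = |Sol(G₁)| · |Sol(G₂)|`.
-/

theorem AddMonoidHom.card_ker_mul_of_surjective {G B : Type*} [AddGroup G] [AddGroup B]
    (f : G →+ B) (hf : Function.Surjective f) :
    Nat.card f.ker * Nat.card B = Nat.card G := by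
  rw [← AddSubgroup.card_mul_index f.ker, AddSubgroup.index_ker, f.range_eq_top.mpr hf,
    AddSubgroup.card_top]

namespace HG

variable {m : ℕ} {V : Type} [DecidableEq V] [Fintype V]

def sol (G : HG m V) : AddSubgroup (V → ZMod m) :=
  G.inc.mulVecLin.toAddMonoidHom.ker

theorem mem_sol_iff (G : HG m V) (x : V → ZMod m) :
    x ∈ G.sol ↔ ∀ e ∈ G.edges, ∑ v ∈ e, x v = 0 := by
  simp only [sol, AddMonoidHom.mem_ker, LinearMap.toAddMonoidHom_coe, mulVecLin_apply,
    funext_iff, Pi.zero_apply, mulVec, dotProduct, inc, of_apply, ite_mul, one_mul, zero_mul,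
    Finset.sum_ite_mem, Finset.univ_inter, Subtype.forall]

theorem const_mem_sol (G : HG m V) (c : ZMod m) : (fun _ => c) ∈ G.sol := by
  rw [mem_sol_iff]
  intro e he
  rw [Finset.sum_const, G.uniform e he, nsmul_eq_mul, ZMod.natCast_self, zero_mul]

def evalSol (G : HG m V) (v : V) : G.sol →+ ZMod m :=
  (Pi.evalAddMonoidHom (fun _ => ZMod m) v).comp G.sol.subtype

theorem evalSol_surjective (G : HG m V) (v : V) : Function.Surjective (G.evalSol v) :=
  fun c => ⟨⟨fun _ => c, G.const_mem_sol c⟩, rfl⟩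

theorem card_sol_eq_stabIndex_mul (G : HG m V) (v : V) :
    Nat.card G.sol = G.stabIndex v * m := by
  rw [← (G.evalSol v).card_ker_mul_of_surjective (G.evalSol_surjective v), Nat.card_zmod]
  congr 1
  exact Nat.card_congr
    ⟨fun y => ⟨y.1.1, y.1.2, y.2⟩, fun x => ⟨⟨x.1, x.2.1⟩, x.2.2⟩, fun _ => rfl, fun _ => rfl⟩

end HG

section Coalescence

theorem coalMap_self {V₁ V₂ : Type} [DecidableEq V₂] (u₁ : V₁) (u₂ : V₂) :
    coalMap u₁ u₂ u₂ = Sum.inl u₁ :=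
  dif_pos rfl

theorem coalMap_of_ne {V₁ V₂ : Type} [DecidableEq V₂] (u₁ : V₁) {u₂ v : V₂} (h : v ≠ u₂) :
    coalMap u₁ u₂ v = Sum.inr ⟨v, h⟩ :=
  dif_neg h

theorem sum_elim_comp_coalMap {V₁ V₂ α : Type} [DecidableEq V₂] {u₁ : V₁} {u₂ : V₂}
    (x₁ : V₁ → α) (x₂ : V₂ → α) (h : x₁ u₁ = x₂ u₂) :
    Sum.elim x₁ (x₂ ∘ Subtype.val) ∘ coalMap u₁ u₂ = x₂ := by
  funext v
  by_cases hv : v = u₂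
  · subst hv
    simp [coalMap_self, h]
  · simp [coalMap_of_ne u₁ hv]

variable {m : ℕ} {V₁ V₂ : Type} [DecidableEq V₁] [Fintype V₁] [DecidableEq V₂] [Fintype V₂]
  (G₁ : HG m V₁) (G₂ : HG m V₂) (u₁ : V₁) (u₂ : V₂)

theorem mem_sol_coalescence_iff (x : V₁ ⊕ {v : V₂ // v ≠ u₂} → ZMod m) :
    x ∈ (coalescence G₁ G₂ u₁ u₂).sol ↔
      x ∘ Sum.inl ∈ G₁.sol ∧ x ∘ coalMap u₁ u₂ ∈ G₂.sol := by
  simp only [HG.mem_sol_iff, coalescence, Finset.mem_union, Finset.mem_image, or_imp,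
    forall_and, forall_exists_index, and_imp, forall_apply_eq_imp_iff₂, Function.comp_apply,
    Finset.sum_image Sum.inl_injective.injOn, Finset.sum_image (coalMap_injective u₁ u₂).injOn]

def gluingDefect : G₁.sol × G₂.sol →+ ZMod m :=
  (G₁.evalSol u₁).comp (AddMonoidHom.fst _ _) - (G₂.evalSol u₂).comp (AddMonoidHom.snd _ _)

theorem gluingDefect_surjective : Function.Surjective (gluingDefect G₁ G₂ u₁ u₂) :=
  fun c => ⟨(⟨fun _ => c, G₁.const_mem_sol c⟩, 0), by simp [gluingDefect, HG.evalSol]⟩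

def solCoalescenceEquiv : (coalescence G₁ G₂ u₁ u₂).sol ≃ (gluingDefect G₁ G₂ u₁ u₂).ker where
  toFun x :=
    have hx := (mem_sol_coalescence_iff G₁ G₂ u₁ u₂ x).mp x.2
    ⟨(⟨_, hx.1⟩, ⟨_, hx.2⟩), by simp [gluingDefect, HG.evalSol, coalMap_self]⟩
  invFun p := ⟨Sum.elim p.1.1.1 (p.1.2.1 ∘ Subtype.val), by
    have hp : p.1.1.1 u₁ = p.1.2.1 u₂ := sub_eq_zero.mp p.2
    rw [mem_sol_coalescence_iff, Sum.elim_comp_inl, sum_elim_comp_coalMap _ _ hp]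
    exact ⟨p.1.1.2, p.1.2.2⟩⟩
  left_inv x := by
    ext (v | ⟨v, hv⟩)
    · rfl
    · simp [coalMap_of_ne u₁ hv]
  right_inv p := by
    have hp : p.1.1.1 u₁ = p.1.2.1 u₂ := sub_eq_zero.mp p.2
    ext v
    · rfl
    · exact congrFun (sum_elim_comp_coalMap _ _ hp) v

theorem card_sol_coalescence_mul :
    Nat.card (coalescence G₁ G₂ u₁ u₂).sol * m = Nat.card G₁.sol * Nat.card G₂.sol := by
  have h := (gluingDefect G₁ G₂ u₁ u₂).card_ker_mul_of_surjective
    (gluingDefect_surjective G₁ G₂ u₁ u₂)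
  rwa [Nat.card_zmod, Nat.card_prod, ← Nat.card_congr (solCoalescenceEquiv G₁ G₂ u₁ u₂)] at h

end Coalescence

theorem stabIndex_coalescence_general (m : ℕ) (hm : 2 ≤ m) {V₁ V₂ : Type}
    [DecidableEq V₁] [Fintype V₁] [DecidableEq V₂] [Fintype V₂]
    (G₁ : HG m V₁) (G₂ : HG m V₂) (u₁ : V₁) (u₂ : V₂)
    (v₀ : V₁ ⊕ {v : V₂ // v ≠ u₂}) (v₁ : V₁) (v₂ : V₂) :
    (coalescence G₁ G₂ u₁ u₂).stabIndex v₀ = G₁.stabIndex v₁ * G₂.stabIndex v₂ := by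
  refine Nat.eq_of_mul_eq_mul_right (show 0 < m * m by positivity) ?_
  calc (coalescence G₁ G₂ u₁ u₂).stabIndex v₀ * (m * m)
      = Nat.card (coalescence G₁ G₂ u₁ u₂).sol * m := by
        rw [HG.card_sol_eq_stabIndex_mul _ v₀, mul_assoc]
    _ = Nat.card G₁.sol * Nat.card G₂.sol := card_sol_coalescence_mul G₁ G₂ u₁ u₂
    _ = G₁.stabIndex v₁ * G₂.stabIndex v₂ * (m * m) := by
        rw [HG.card_sol_eq_stabIndex_mul G₁ v₁, HG.card_sol_eq_stabIndex_mul G₂ v₂]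
        ring

/-- **Stabilizing index of a coalescence.** For nontrivial connected `m`-uniform
hypergraphs `G₁`, `G₂`, the stabilizing index of the coalescence `G₁(u₁) ⊙ G₂(u₂)` is the
product of the stabilizing indices of `G₁` and `G₂` (for any choice of base vertices). -/
theorem stabIndex_coalescence (m : ℕ) (hm : 2 ≤ m) {V₁ V₂ : Type}
    [DecidableEq V₁] [Fintype V₁] [DecidableEq V₂] [Fintype V₂]
    (G₁ : HG m V₁) (G₂ : HG m V₂) (u₁ : V₁) (u₂ : V₂)
    (h₁ : G₁.Connected) (h₂ : G₂.Connected)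
    (hn₁ : 2 ≤ Fintype.card V₁) (hn₂ : 2 ≤ Fintype.card V₂)
    (v₀ : V₁ ⊕ {v : V₂ // v ≠ u₂}) (v₁ : V₁) (v₂ : V₂) :
    (coalescence G₁ G₂ u₁ u₂).stabIndex v₀ = G₁.stabIndex v₁ * G₂.stabIndex v₂ :=
  stabIndex_coalescence_general m hm G₁ G₂ u₁ u₂ v₀ v₁ v₂
end

section
/- Let T be an m-uniform hypertree with s edges. Then the stabilizing index of T is s(T) = m^{s(m−2)}. -/
open Matrix

namespace HG

/-- `G` has a cycle: an alternating sequence `v₀ e₁ v₁ ⋯ e_t v_t` with `v₀ = v_t`,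
pairwise distinct vertices `v₀, …, v_{t-1}`, pairwise distinct edges, consecutive vertices
distinct and lying in the corresponding edge. -/
def HasCycle {m : ℕ} {V : Type} (G : HG m V) : Prop :=
  ∃ t : ℕ, 2 ≤ t ∧ ∃ (v : Fin (t + 1) → V) (e : Fin t → Finset V),
    (∀ i, e i ∈ G.edges) ∧
    (∀ i : Fin t, v i.castSucc ∈ e i ∧ v i.succ ∈ e i ∧ v i.castSucc ≠ v i.succ) ∧
    v (Fin.last t) = v 0 ∧
    Function.Injective (fun i : Fin t => v i.castSucc) ∧
    Function.Injective e

end HG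

/-!
Every nonempty set of edges of an acyclic hypergraph with edges of size at least two has a leaf,
an edge meeting the union of the others in at most one vertex: otherwise the last edge of a
longest path shares a second vertex with some other edge, and following that edge either closes
a cycle or extends the path.
Peeling off leaves shows that the edges of `T` cover at least `s(m-1)+1` vertices, and that the
edge-sum map `x ↦ In(T)x` is onto, since a leaf has a private vertex whose value fixes the sum
over that leaf. Connectivity bounds the number of vertices from above by the same number, so
`|V| = s(m-1)+1`. Adding a constant to `x` changes every edge sum by a multiple of `m`, hence
`x ↦ (In(T)x, x v₀)` maps `(ℤ/m)^V` onto `(ℤ/m)^(s+1)`, and its kernel has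
`m^(s(m-1)+1-(s+1)) = m^(s(m-2))` elements.
-/

theorem Finset.biUnion_id_eq_union_erase {V : Type} [DecidableEq V] {E : Finset (Finset V)}
    {e : Finset V} (he : e ∈ E) :
    E.biUnion id = e ∪ (E.erase e).biUnion id := by
  conv_lhs => rw [← Finset.insert_erase he]
  rw [Finset.biUnion_insert, id]

theorem AddMonoidHom.card_ker_mul_card_of_surjective {A B : Type*} [AddGroup A] [AddGroup B]
    (f : A →+ B) (hf : Function.Surjective f) : Nat.card f.ker * Nat.card B = Nat.card A := by
  rw [← f.ker.card_mul_index, AddSubgroup.index_ker, f.range_eq_top.mpr hf, AddSubgroup.card_top]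

namespace HG

variable {m : ℕ} {V : Type} {G : HG m V} {E : Finset (Finset V)}

/-- A loose path `v 0, e 0, v 1, …, e (t - 1), v t` with edges in `E`; only the values of `v`
on `[0, t]` and of `e` on `[0, t)` matter. -/
structure IsPath (E : Finset (Finset V)) (t : ℕ) (v : ℕ → V) (e : ℕ → Finset V) : Prop where
  edge_mem : ∀ i < t, e i ∈ E
  left_mem : ∀ i < t, v i ∈ e i
  right_mem : ∀ i < t, v (i + 1) ∈ e i
  vert_inj : ∀ i ≤ t, ∀ j ≤ t, v i = v j → i = j
  edge_inj : ∀ i < t, ∀ j < t, e i = e j → i = j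

namespace IsPath

variable {t : ℕ} {v : ℕ → V} {e : ℕ → Finset V}

theorem length_le_card (h : IsPath E t v e) : t ≤ E.card := by
  simpa using Finset.card_le_card_of_injOn e (s := Finset.range t)
    (fun i hi => h.edge_mem i (Finset.mem_range.mp hi))
    (fun i hi j hj hij => h.edge_inj i (by simpa using hi) j (by simpa using hj) hij)

theorem segment (h : IsPath E t v e) {a c : ℕ} (hac : a ≤ c) (hct : c ≤ t) :
    IsPath E (c - a) (fun i => v (a + i)) (fun i => e (a + i)) where
  edge_mem i hi := h.edge_mem _ (by omega)
  left_mem i hi := h.left_mem _ (by omega)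
  right_mem i hi := h.right_mem _ (by omega)
  vert_inj i hi j hj hij := by have := h.vert_inj _ (by omega) _ (by omega) hij; omega
  edge_inj i hi j hj hij := by have := h.edge_inj _ (by omega) _ (by omega) hij; omega

theorem update_last (h : IsPath E t v e) (ht : 0 < t) {u : V} (hu : u ∈ e (t - 1))
    (hnew : ∀ i < t, u ≠ v i) : IsPath E t (Function.update v t u) e where
  edge_mem := h.edge_mem
  left_mem i hi := by
    rw [Function.update_of_ne (by omega)]
    exact h.left_mem i hi
  right_mem i hi := by
    rcases eq_or_ne (i + 1) t with rfl | hne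
    · simpa using hu
    · rw [Function.update_of_ne hne]
      exact h.right_mem i hi
  vert_inj i hi j hj hij := by
    simp only [Function.update_apply] at hij
    split_ifs at hij with hit hjt
    · omega
    · exact absurd hij (hnew j (by omega))
    · exact absurd hij.symm (hnew i (by omega))
    · exact h.vert_inj i hi j hj hij
  edge_inj := h.edge_inj

theorem snoc (h : IsPath E t v e) {f : Finset V} {z : V} (hf : f ∈ E) (hvf : v t ∈ f)
    (hz : z ∈ f) (hznew : ∀ i ≤ t, z ≠ v i) (hfnew : ∀ i < t, e i ≠ f) :
    IsPath E (t + 1) (Function.update v (t + 1) z) (Function.update e t f) where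
  edge_mem i hi := by
    rcases eq_or_ne i t with rfl | hne
    · simpa using hf
    · rw [Function.update_of_ne hne]
      exact h.edge_mem i (by omega)
  left_mem i hi := by
    rw [Function.update_of_ne (by omega : i ≠ t + 1)]
    rcases eq_or_ne i t with rfl | hne
    · simpa using hvf
    · rw [Function.update_of_ne hne]
      exact h.left_mem i (by omega)
  right_mem i hi := by
    rcases eq_or_ne i t with rfl | hne
    · simpa using hz
    · rw [Function.update_of_ne (by omega : i + 1 ≠ t + 1), Function.update_of_ne hne]
      exact h.right_mem i (by omega)
  vert_inj i hi j hj hij := by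
    simp only [Function.update_apply] at hij
    split_ifs at hij with hit hjt
    · omega
    · exact absurd hij (hznew j (by omega))
    · exact absurd hij.symm (hznew i (by omega))
    · exact h.vert_inj i (by omega) j (by omega) hij
  edge_inj i hi j hj hij := by
    simp only [Function.update_apply] at hij
    split_ifs at hij with hit hjt
    · omega
    · exact absurd hij.symm (hfnew j (by omega))
    · exact absurd hij (hfnew i (by omega))
    · exact h.edge_inj i (by omega) j (by omega) hij

theorem hasCycle (hE : E ⊆ G.edges) (h : IsPath E t v e) (ht : 0 < t)
    {g : Finset V} (hg : g ∈ G.edges) (h0 : v 0 ∈ g) (hlast : v t ∈ g)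
    (hgnew : ∀ i < t, e i ≠ g) : G.HasCycle := by
  -- the cycle `v 0, e 0, …, v t, g, v 0`, its vertices indexed modulo `t + 1`
  refine ⟨t + 1, by omega, fun k => v (k % (t + 1)), fun k => if (k : ℕ) < t then e k else g,
    fun k => ?_, fun k => ?_, by simp, fun i j hij => ?_, fun i j hij => ?_⟩
  · dsimp only
    split_ifs with hk
    exacts [hE (h.edge_mem k hk), hg]
  · have hk := k.isLt
    simp only [Fin.val_castSucc, Fin.val_succ, Nat.mod_eq_of_lt hk]
    split_ifs with hkt
    · rw [Nat.mod_eq_of_lt (by omega)]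
      exact ⟨h.left_mem k hkt, h.right_mem k hkt,
        fun hv => by have := h.vert_inj k (by omega) (k + 1) (by omega) hv; omega⟩
    · rw [show (k : ℕ) = t by omega, Nat.mod_self]
      exact ⟨hlast, h0, fun hv => by have := h.vert_inj t le_rfl 0 (by omega) hv; omega⟩
  · have hi := i.isLt
    have hj := j.isLt
    simp only [Fin.val_castSucc, Nat.mod_eq_of_lt hi, Nat.mod_eq_of_lt hj] at hij
    exact Fin.ext (h.vert_inj i (by omega) j (by omega) hij)
  · have hi := i.isLt
    have hj := j.isLt
    simp only at hij
    split_ifs at hij with hit hjt hjt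
    · exact Fin.ext (h.edge_inj i hit j hjt hij)
    · exact absurd hij (hgnew i hit)
    · exact absurd hij.symm (hgnew j hjt)
    · exact Fin.ext (by omega)

end IsPath

theorem exists_isPath_one (hm : 2 ≤ m) (hE : E ⊆ G.edges) (hne : E.Nonempty) :
    ∃ v e, IsPath E 1 v e := by
  obtain ⟨f, hf⟩ := hne
  obtain ⟨x, hx, y, hy, hxy⟩ :=
    Finset.one_lt_card.mp (by rw [G.uniform f (hE hf)]; omega : 1 < f.card)
  refine ⟨fun i => if i = 0 then x else y, fun _ => f, ⟨?_, ?_, ?_, ?_, ?_⟩⟩ <;>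
    intro i hi <;> simp_all
  intro j hj
  interval_cases i <;> interval_cases j <;> simp_all [Ne.symm hxy]

/-- Joining every vertex of each edge to a chosen vertex of that edge gives a connected simple
graph with at most `m - 1` edges per hyperedge. -/
theorem Connected.card_le (hconn : G.Connected) : Nat.card V ≤ G.edges.card * (m - 1) + 1 := by
  classical
  rcases isEmpty_or_nonempty V with hV | hV
  · simp
  let r : Finset V → V := fun e => Classical.epsilon (· ∈ e)
  let S : Finset (Sym2 V) :=
    (G.edges.sigma fun e => e.erase (r e)).image fun p => s(p.2, r p.1)
  let H : SimpleGraph V := SimpleGraph.fromEdgeSet S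
  have hreach : ∀ e ∈ G.edges, ∀ u ∈ e, H.Reachable u (r e) := by
    intro e he u hu
    by_cases hur : u = r e
    · rw [hur]
    · refine SimpleGraph.Adj.reachable ((SimpleGraph.fromEdgeSet_adj _).mpr ⟨?_, hur⟩)
      exact Finset.mem_coe.mpr (Finset.mem_image.mpr
        ⟨⟨e, u⟩, Finset.mem_sigma.mpr ⟨he, Finset.mem_erase.mpr ⟨hur, hu⟩⟩, rfl⟩)
  have hH : H.Connected := by
    refine SimpleGraph.Connected.mk fun u w => ?_
    induction hconn u w with
    | refl => rfl
    | tail _ hadj ih =>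
      obtain ⟨-, e, he, hb, hc⟩ := hadj
      exact ih.trans ((hreach e he _ hb).trans (hreach e he _ hc).symm)
  have hroot : ∀ e ∈ G.edges, (e.erase (r e)).card ≤ m - 1 := by
    intro e he
    rcases e.eq_empty_or_nonempty with rfl | hne
    · simp
    · rw [Finset.card_erase_of_mem (Classical.epsilon_spec hne), G.uniform e he]
  calc Nat.card V ≤ Nat.card H.edgeSet + 1 := hH.card_vert_le_card_edgeSet_add_one
    _ ≤ S.card + 1 := by
      gcongr
      rw [← Nat.card_eq_finsetCard]
      exact Nat.card_mono S.finite_toSet (by simp [H, SimpleGraph.edgeSet_fromEdgeSet])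
    _ ≤ (G.edges.sigma fun e => e.erase (r e)).card + 1 := by
      gcongr
      exact Finset.card_image_le
    _ ≤ G.edges.card * (m - 1) + 1 := by
      gcongr
      rw [Finset.card_sigma]
      simpa using Finset.sum_le_card_nsmul _ _ _ hroot

section DecidableEq

variable [DecidableEq V]

theorem IsPath.hasCycle_or_extend (hm : 2 ≤ m) (hE : E ⊆ G.edges) {t : ℕ} {v : ℕ → V}
    {e : ℕ → Finset V} (h : IsPath E t v e) (ht : 0 < t) {f : Finset V} (hf : f ∈ E)
    (hvf : v t ∈ f) (hfne : f ≠ e (t - 1)) :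
    G.HasCycle ∨ ∃ v' e', IsPath E (t + 1) v' e' := by
  by_cases hfold : ∃ j < t, e j = f
  · obtain ⟨j, hjt, rfl⟩ := hfold
    have hj : j + 1 < t := by
      by_contra
      exact hfne (by rw [show j = t - 1 by omega])
    refine .inl ((h.segment (a := j + 1) hjt le_rfl).hasCycle hE (by omega)
      (hE (h.edge_mem j hjt)) (h.right_mem j hjt) (by simpa [Nat.add_sub_cancel' hjt] using hvf)
      fun i hi hij => ?_)
    have := h.edge_inj _ (by omega) j hjt hij
    omega
  push Not at hfold
  obtain ⟨z, hz, hzne⟩ :=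
    Finset.exists_mem_ne (by rw [G.uniform f (hE hf)]; omega : 1 < f.card) (v t)
  by_cases hzold : ∃ i ≤ t, v i = z
  · obtain ⟨i, hit, rfl⟩ := hzold
    have hi : i < t := lt_of_le_of_ne hit (by rintro rfl; exact hzne rfl)
    exact .inl ((h.segment hit le_rfl).hasCycle hE (by omega) (hE hf) (by simpa using hz)
      (by simpa [Nat.add_sub_cancel' hit] using hvf) fun k hk => hfold _ (by omega))
  push Not at hzold
  exact .inr ⟨_, _, h.snoc hf hvf hz (fun i hi => (hzold i hi).symm) hfold⟩

theorem exists_leaf (hm : 2 ≤ m) (hacyc : ¬G.HasCycle) (hE : E ⊆ G.edges) (hne : E.Nonempty) :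
    ∃ e ∈ E, (e ∩ (E.erase e).biUnion id).card ≤ 1 := by
  classical
  by_contra! hleaf
  let P : ℕ → Prop := fun t => ∃ v e, IsPath E t v e
  have hP1 : P 1 := exists_isPath_one hm hE hne
  have hcard : 1 ≤ E.card := hne.card_pos
  obtain ⟨v, e, h⟩ : P (Nat.findGreatest P E.card) := Nat.findGreatest_spec hcard hP1
  set t := Nat.findGreatest P E.card
  have ht : 0 < t := Nat.le_findGreatest hcard hP1
  suffices hsucc : P (t + 1) by
    obtain ⟨_, _, h'⟩ := hsucc
    exact Nat.findGreatest_is_greatest (Nat.lt_succ_self t) h'.length_le_card ⟨_, _, h'⟩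
  obtain ⟨u, hu, hune⟩ :=
    Finset.exists_mem_ne (hleaf _ (h.edge_mem (t - 1) (by omega))) (v (t - 1))
  obtain ⟨hud, hu'⟩ := Finset.mem_inter.mp hu
  obtain ⟨f, hf, huf⟩ := Finset.mem_biUnion.mp hu'
  obtain ⟨hfne, hfE⟩ := Finset.mem_erase.mp hf
  by_cases hold : ∃ i < t, v i = u
  · obtain ⟨i, hit, rfl⟩ := hold
    have hi : i < t - 1 := lt_of_le_of_ne (by omega) (by rintro rfl; exact hune rfl)
    refine (hacyc ((h.segment hi.le (by omega)).hasCycle hE (by omega)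
      (hE (h.edge_mem (t - 1) (by omega))) (by simpa using hud)
      (by simpa [Nat.add_sub_cancel' hi.le] using h.left_mem (t - 1) (by omega))
      fun k hk hk' => ?_)).elim
    have := h.edge_inj _ (by omega) _ (by omega) hk'
    omega
  push Not at hold
  have h' := h.update_last ht hud fun i hi => (hold i hi).symm
  rcases h'.hasCycle_or_extend hm hE ht hfE (by simpa using huf) hfne with hcyc | hext
  exacts [(hacyc hcyc).elim, hext]

theorem card_mul_add_one_le_card_biUnion (hm : 2 ≤ m) (hacyc : ¬G.HasCycle) (hE : E ⊆ G.edges)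
    (hne : E.Nonempty) : E.card * (m - 1) + 1 ≤ (E.biUnion id).card := by
  induction E using Finset.strongInduction with
  | H E ih =>
  obtain ⟨e, he, hleaf⟩ := exists_leaf hm hacyc hE hne
  have hcard_e := G.uniform e (hE he)
  rw [Finset.biUnion_id_eq_union_erase he, ← Finset.card_erase_add_one he, add_one_mul]
  rcases (E.erase e).eq_empty_or_nonempty with hempty | hne'
  · simp only [hempty, Finset.card_empty, Finset.biUnion_empty, Finset.union_empty]
    omega
  · have hrest := ih _ (Finset.erase_ssubset he) ((Finset.erase_subset e E).trans hE) hne'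
    have := Finset.card_union_add_card_inter e ((E.erase e).biUnion id)
    omega

theorem exists_forall_sum_eq {R : Type*} [AddCommGroup R] (hm : 2 ≤ m) (hacyc : ¬G.HasCycle)
    (hE : E ⊆ G.edges) (y : Finset V → R) : ∃ x : V → R, ∀ e ∈ E, ∑ v ∈ e, x v = y e := by
  induction E using Finset.strongInduction with
  | H E ih =>
  rcases E.eq_empty_or_nonempty with rfl | hne
  · exact ⟨0, by simp⟩
  obtain ⟨e, he, hleaf⟩ := exists_leaf hm hacyc hE hne
  obtain ⟨x, hx⟩ := ih _ (Finset.erase_ssubset he) ((Finset.erase_subset e E).trans hE)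
  obtain ⟨p, hp⟩ : (e \ (E.erase e).biUnion id).Nonempty := by
    rw [← Finset.card_pos]
    have := Finset.card_sdiff_add_card_inter e ((E.erase e).biUnion id)
    have := G.uniform e (hE he)
    omega
  obtain ⟨hpe, hpU⟩ := Finset.mem_sdiff.mp hp
  refine ⟨Function.update x p (x p + (y e - ∑ v ∈ e, x v)), fun f hf => ?_⟩
  rcases eq_or_ne f e with rfl | hfe
  · have hsplit := Finset.sum_sdiff (f := x) (Finset.singleton_subset_iff.mpr hpe)
    rw [Finset.sum_singleton] at hsplit
    rw [Finset.sum_update_of_mem hpe, ← hsplit]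
    abel
  · have hf' : f ∈ E.erase e := Finset.mem_erase.mpr ⟨hfe, hf⟩
    rw [← hx f hf']
    refine Finset.sum_congr rfl fun v hv => Function.update_of_ne ?_ _ _
    rintro rfl
    exact hpU (Finset.mem_biUnion.mpr ⟨f, hf', hv⟩)

theorem card_eq_of_connected_of_not_hasCycle [Fintype V] [Nonempty V]
    (hm : 2 ≤ m) (hconn : G.Connected) (hacyc : ¬G.HasCycle) :
    Nat.card V = G.edges.card * (m - 1) + 1 := by
  refine hconn.card_le.antisymm ?_
  rcases G.edges.eq_empty_or_nonempty with hempty | hne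
  · simp [hempty, Nat.one_le_iff_ne_zero]
  calc G.edges.card * (m - 1) + 1 ≤ (G.edges.biUnion id).card :=
        card_mul_add_one_le_card_biUnion hm hacyc subset_rfl hne
    _ ≤ Nat.card V := by
      rw [Nat.card_eq_fintype_card]
      exact Finset.card_le_univ _

variable [Fintype V]

def incEval (G : HG m V) (v₀ : V) : (V → ZMod m) →+ (G.edges → ZMod m) × ZMod m :=
  (Matrix.mulVecLin G.inc).toAddMonoidHom.prod (Pi.evalAddMonoidHom _ v₀)

theorem stabIndex_eq_card_ker (G : HG m V) (v₀ : V) :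
    G.stabIndex v₀ = Nat.card (G.incEval v₀).ker :=
  Nat.card_congr <| Equiv.subtypeEquivRight fun x => by
    simp [incEval, Prod.ext_iff]

theorem inc_mulVec_apply (G : HG m V) (x : V → ZMod m) (e : G.edges) :
    (G.inc *ᵥ x) e = ∑ v ∈ e.1, x v := by
  simp [HG.inc, Matrix.mulVec, dotProduct, Finset.sum_ite_mem]

theorem incEval_surjective (hm : 2 ≤ m) (hacyc : ¬G.HasCycle) (v₀ : V) :
    Function.Surjective (G.incEval v₀) := by
  rintro ⟨y, c⟩
  obtain ⟨x, hx⟩ := exists_forall_sum_eq hm hacyc subset_rfl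
    fun e => if h : e ∈ G.edges then y ⟨e, h⟩ else 0
  refine ⟨fun v => x v + (c - x v₀), Prod.ext (funext fun e => ?_) (by simp [incEval])⟩
  simp [incEval, inc_mulVec_apply, Finset.sum_add_distrib, G.uniform e.1 e.2, hx e.1 e.2]

end DecidableEq

end HG

/-- **Stabilizing index of a hypertree.** An `m`-uniform hypertree (connected and acyclic)
with `s` edges has stabilizing index `m^{s(m-2)}`. -/
theorem stabIndex_hypertree (m s : ℕ) (hm : 2 ≤ m) {V : Type} [DecidableEq V] [Fintype V]
    (T : HG m V) (hconn : T.Connected) (hacyc : ¬ T.HasCycle)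
    (hs : T.edges.card = s) (v₀ : V) :
    T.stabIndex v₀ = m ^ (s * (m - 2)) := by
  have : Nonempty V := ⟨v₀⟩
  have hV := HG.card_eq_of_connected_of_not_hasCycle hm hconn hacyc
  have hker := (T.incEval v₀).card_ker_mul_card_of_surjective (HG.incEval_surjective hm hacyc v₀)
  simp only [Nat.card_prod, Nat.card_pi, Nat.card_zmod, Finset.prod_const, Finset.card_univ,
    ← Nat.card_eq_fintype_card, Nat.card_eq_finsetCard, hV, hs] at hker
  rw [HG.stabIndex_eq_card_ker]
  have hexp : s * (m - 1) + 1 = s * (m - 2) + (s + 1) := by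
    rw [show m - 1 = m - 2 + 1 by omega]
    ring
  refine Nat.eq_of_mul_eq_mul_right (pow_pos (by omega : 0 < m) (s + 1)) ?_
  rw [← pow_add, ← hexp, ← hker, pow_succ]
end

section
/- Let G = G₁(u) ⊙ G₂(u) be the coalescence of two nontrivial connected m-uniform hypergraphs at a vertex u, and for a hypergraph H let c(H) denote the largest divisor ℓ of m such that In(H)x = (m/ℓ)𝟙 has a solution over ℤ/mℤ. Then c(G) = gcd(c(G₁), c(G₂)). -/
/-!
The constant edge sums `c` realised by some labelling `x : V → ZMod m` form an additive subgroup
of `ZMod m`. Its preimage in `ℤ` is `dℤ` for some `d ∣ m`, so `G` has an `(m,ℓ)`-coloring iff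
`d ∣ m/ℓ`, i.e. iff `ℓ ∣ m/d`; hence `c(G) = m/d` and the `ℓ` admitting a coloring are exactly the
divisors of `c(G)`. For the coalescence the subgroup is the intersection of those of `G₁` and
`G₂`: a labelling of `G₂`, shifted by a constant (which does not change `m`-element edge sums),
agrees with one of `G₁` at the glued vertex. Divisors of `c(G)` are thus the common divisors of
`c(G₁)` and `c(G₂)`.
-/

open Matrix

lemma Nat.sSup_setOf_dvd (n : ℕ) : sSup {ℓ : ℕ | ℓ ∣ n} = n := by
  rcases Nat.eq_zero_or_pos n with rfl | hn
  · simp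
  · exact IsGreatest.csSup_eq ⟨dvd_refl n, fun ℓ hℓ => Nat.le_of_dvd hn hℓ⟩

lemma Nat.dvd_and_dvd_div_iff_mul_dvd {a b n : ℕ} : a ∣ n ∧ b ∣ n / a ↔ a * b ∣ n := by
  refine ⟨fun ⟨ha, hb⟩ => (Nat.dvd_div_iff_mul_dvd ha).mp hb, fun h => ?_⟩
  have ha : a ∣ n := (dvd_mul_right a b).trans h
  exact ⟨ha, (Nat.dvd_div_iff_mul_dvd ha).mpr h⟩

lemma ZMod.exists_natCast_mem_iff_dvd {m : ℕ} (H : AddSubgroup (ZMod m)) :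
    ∃ d : ℕ, ∀ n : ℕ, (n : ZMod m) ∈ H ↔ d ∣ n := by
  obtain ⟨a, ha⟩ := Int.subgroup_cyclic (H.comap (Int.castAddHom (ZMod m)))
  refine ⟨a.natAbs, fun n => ?_⟩
  have hmem : (n : ZMod m) ∈ H ↔ (n : ℤ) ∈ H.comap (Int.castAddHom (ZMod m)) := by simp
  rw [hmem, ha, ← AddSubgroup.zmultiples_eq_closure, Int.mem_zmultiples_iff, ← Int.natAbs_dvd,
    Int.natCast_dvd_natCast]

namespace HG

variable {m : ℕ} {V : Type}

def edgeSums (G : HG m V) : AddSubgroup (ZMod m) where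
  carrier := {c | ∃ x : V → ZMod m, ∀ e ∈ G.edges, ∑ v ∈ e, x v = c}
  zero_mem' := ⟨0, fun e _ => Finset.sum_const_zero⟩
  add_mem' := by
    rintro _ _ ⟨x, hx⟩ ⟨y, hy⟩
    exact ⟨x + y, fun e he => by
      simp only [Pi.add_apply, Finset.sum_add_distrib, hx e he, hy e he]⟩
  neg_mem' := by
    rintro _ ⟨x, hx⟩
    exact ⟨-x, fun e he => by simp only [Pi.neg_apply, Finset.sum_neg_distrib, hx e he]⟩

/-- `G` has an `(m,ℓ)`-coloring. -/
def HasColoring (G : HG m V) (ℓ : ℕ) : Prop :=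
  ℓ ∣ m ∧ ((m / ℓ : ℕ) : ZMod m) ∈ G.edgeSums

lemma cyclicIndex_eq_sSup (G : HG m V) : G.cyclicIndex = sSup {ℓ | G.HasColoring ℓ} := rfl

lemma dvd_cyclicIndex_iff (G : HG m V) (ℓ : ℕ) : ℓ ∣ G.cyclicIndex ↔ G.HasColoring ℓ := by
  obtain ⟨d, hd⟩ := ZMod.exists_natCast_mem_iff_dvd G.edgeSums
  have hdm : d ∣ m := (hd m).mp (by simp [zero_mem])
  have hcol : ∀ ℓ, G.HasColoring ℓ ↔ ℓ ∣ m / d := fun ℓ => by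
    rw [HasColoring, hd, Nat.dvd_and_dvd_div_iff_mul_dvd, Nat.dvd_div_iff_mul_dvd hdm, mul_comm]
  have hset : {ℓ | G.HasColoring ℓ} = {ℓ | ℓ ∣ m / d} := Set.ext hcol
  rw [cyclicIndex_eq_sSup, hset, Nat.sSup_setOf_dvd, hcol]

lemma sum_add_const (G : HG m V) {e : Finset V} (he : e ∈ G.edges) (x : V → ZMod m)
    (t : ZMod m) : ∑ v ∈ e, (x v + t) = ∑ v ∈ e, x v := by
  rw [Finset.sum_add_distrib, Finset.sum_const, G.uniform e he, nsmul_eq_mul, ZMod.natCast_self,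
    zero_mul, add_zero]

end HG

lemma Sum.elim_coalMap {V₁ V₂ α : Type} [DecidableEq V₂] {u₁ : V₁} {u₂ : V₂} {x : V₁ → α}
    {y : V₂ → α} (h : y u₂ = x u₁) (v : V₂) :
    Sum.elim x (fun w : {v : V₂ // v ≠ u₂} => y w) (coalMap u₁ u₂ v) = y v := by
  unfold coalMap
  split_ifs with hv
  · rw [hv, h, Sum.elim_inl]
  · rfl

section Coalescence

variable {m : ℕ} {V₁ V₂ : Type} [DecidableEq V₁] [DecidableEq V₂]
  (G₁ : HG m V₁) (G₂ : HG m V₂) (u₁ : V₁) (u₂ : V₂)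

lemma edgeSums_coalescence :
    (coalescence G₁ G₂ u₁ u₂).edgeSums = G₁.edgeSums ⊓ G₂.edgeSums := by
  ext c
  constructor
  · rintro ⟨x, hx⟩
    refine ⟨⟨x ∘ Sum.inl, fun e he => ?_⟩, ⟨x ∘ coalMap u₁ u₂, fun e he => ?_⟩⟩
    · rw [← hx _ (Finset.mem_union_left _ (Finset.mem_image_of_mem _ he)),
        Finset.sum_image fun _ _ _ _ h => Sum.inl_injective h]
      rfl
    · rw [← hx _ (Finset.mem_union_right _ (Finset.mem_image_of_mem _ he)),
        Finset.sum_image fun _ _ _ _ h => coalMap_injective u₁ u₂ h]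
      rfl
  · rintro ⟨⟨x₁, hx₁⟩, ⟨x₂, hx₂⟩⟩
    let y : V₂ → ZMod m := fun v => x₂ v + (x₁ u₁ - x₂ u₂)
    have hy : y u₂ = x₁ u₁ := add_sub_cancel (x₂ u₂) (x₁ u₁)
    refine ⟨Sum.elim x₁ fun w : {v // v ≠ u₂} => y w, fun e he => ?_⟩
    simp only [coalescence, Finset.mem_union, Finset.mem_image] at he
    rcases he with ⟨f, hf, rfl⟩ | ⟨f, hf, rfl⟩
    · rw [Finset.sum_image fun _ _ _ _ h => Sum.inl_injective h]
      exact hx₁ f hf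
    · rw [Finset.sum_image fun _ _ _ _ h => coalMap_injective u₁ u₂ h]
      calc ∑ v ∈ f, Sum.elim x₁ (fun w : {v // v ≠ u₂} => y w) (coalMap u₁ u₂ v)
            = ∑ v ∈ f, y v := Finset.sum_congr rfl fun v _ => Sum.elim_coalMap hy v
        _ = c := (G₂.sum_add_const hf x₂ _).trans (hx₂ f hf)

lemma hasColoring_coalescence_iff (ℓ : ℕ) :
    (coalescence G₁ G₂ u₁ u₂).HasColoring ℓ ↔ G₁.HasColoring ℓ ∧ G₂.HasColoring ℓ := by
  simp only [HG.HasColoring, edgeSums_coalescence, AddSubgroup.mem_inf]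
  tauto

end Coalescence

theorem cyclicIndex_coalescence_general (m : ℕ) {V₁ V₂ : Type}
    [DecidableEq V₁] [DecidableEq V₂]
    (G₁ : HG m V₁) (G₂ : HG m V₂) (u₁ : V₁) (u₂ : V₂) :
    (coalescence G₁ G₂ u₁ u₂).cyclicIndex = Nat.gcd G₁.cyclicIndex G₂.cyclicIndex :=
  Nat.dvd_left_iff_eq.mp fun ℓ => by
    rw [Nat.dvd_gcd_iff, HG.dvd_cyclicIndex_iff, HG.dvd_cyclicIndex_iff, HG.dvd_cyclicIndex_iff,
      hasColoring_coalescence_iff]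

/-- **Cyclic index of a coalescence.** For nontrivial connected `m`-uniform hypergraphs
`G₁`, `G₂`, the cyclic index of the coalescence `G₁(u₁) ⊙ G₂(u₂)` is
`gcd(c(G₁), c(G₂))`. -/
theorem cyclicIndex_coalescence (m : ℕ) (hm : 2 ≤ m) {V₁ V₂ : Type}
    [DecidableEq V₁] [Fintype V₁] [DecidableEq V₂] [Fintype V₂]
    (G₁ : HG m V₁) (G₂ : HG m V₂) (u₁ : V₁) (u₂ : V₂)
    (h₁ : G₁.Connected) (h₂ : G₂.Connected)
    (hn₁ : 2 ≤ Fintype.card V₁) (hn₂ : 2 ≤ Fintype.card V₂) :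
    (coalescence G₁ G₂ u₁ u₂).cyclicIndex = Nat.gcd G₁.cyclicIndex G₂.cyclicIndex :=
  cyclicIndex_coalescence_general m G₁ G₂ u₁ u₂
end

section
/- Let T be an m-uniform hypertree. Then c(T) = m; that is, there exists a vertex coloring φ : V(T) → ℤ/mℤ such that the φ-values on each edge sum to 1 mod m. -/
/-!
An acyclic hypergraph with at least one edge, all of whose edges have at least two vertices,
has an edge `e` containing a vertex `w` that lies in no other edge: otherwise every path with
distinct vertices and distinct edges could be extended, or closed into a cycle, which is
impossible since the number of edges bounds the length of a path. Color the hypergraph without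
`e` by induction on the number of edges; since `w` lies only in `e`, the value at `w` can then
be chosen to make the sum on `e` equal to `1` without changing any other edge sum.
-/

open Matrix

theorem Set.InjOn.update_Iio_add_one {α : Type*} {g : ℕ → α} {t : ℕ} {a : α}
    (hg : Set.InjOn g (Set.Iio t)) (ha : ∀ i < t, g i ≠ a) :
    Set.InjOn (Function.update g t a) (Set.Iio (t + 1)) := by
  rw [Set.Iio_add_one_eq_Iic, ← Set.Iio_insert, Set.injOn_insert Set.self_notMem_Iio]
  refine ⟨hg.congr fun i hi => (Function.update_of_ne (ne_of_lt hi) _ _).symm, ?_⟩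
  rintro ⟨i, hi, h⟩
  rw [Function.update_self, Function.update_of_ne (ne_of_lt hi)] at h
  exact ha i hi h

namespace HG

variable {m : ℕ} {V : Type} {G : HG m V}

def eraseEdge [DecidableEq V] (G : HG m V) (e : Finset V) : HG m V :=
  ⟨G.edges.erase e, fun _ hf => G.uniform _ (Finset.mem_of_mem_erase hf)⟩

theorem HasCycle.of_eraseEdge [DecidableEq V] {e : Finset V} (h : (G.eraseEdge e).HasCycle) :
    G.HasCycle := by
  obtain ⟨t, ht, v, f, hf, hvf, hclosed, hv, hf_inj⟩ := h
  exact ⟨t, ht, v, f, fun i => Finset.mem_of_mem_erase (hf i), hvf, hclosed, hv, hf_inj⟩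

theorem hasCycle_of_injOn {t : ℕ} (ht : 2 ≤ t) {v : ℕ → V} {e : ℕ → Finset V}
    (he : ∀ i < t, e i ∈ G.edges) (hleft : ∀ i < t, v i ∈ e i)
    (hright : ∀ i < t, v (i + 1) ∈ e i) (hclosed : v t = v 0)
    (hv : Set.InjOn v (Set.Iio t)) (he_inj : Set.InjOn e (Set.Iio t)) : G.HasCycle := by
  have hstep (i : ℕ) (hi : i < t) : v i ≠ v (i + 1) := by
    intro h
    rcases (by omega : i + 1 < t ∨ i + 1 = t) with hlt | heq
    · have := hv (Set.mem_Iio.2 hi) (Set.mem_Iio.2 hlt) h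
      omega
    · rw [heq, hclosed] at h
      have := hv (Set.mem_Iio.2 hi) (Set.mem_Iio.2 (by omega)) h
      omega
  refine ⟨t, ht, fun i => v i, fun i => e i, fun i => he i i.isLt,
    fun i => ⟨hleft i i.isLt, hright i i.isLt, hstep i i.isLt⟩, hclosed, ?_, ?_⟩
  · exact fun i j h => Fin.ext (hv (Set.mem_Iio.2 i.isLt) (Set.mem_Iio.2 j.isLt) h)
  · exact fun i j h => Fin.ext (he_inj (Set.mem_Iio.2 i.isLt) (Set.mem_Iio.2 j.isLt) h)

/-- `v 0, e 0, v 1, …, e (t - 1), v t` is a path of length `t` in `G`; the values of `v` and `e`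
beyond these indices are irrelevant. -/
structure IsPath_s18 (G : HG m V) (v : ℕ → V) (e : ℕ → Finset V) (t : ℕ) : Prop where
  edge_mem : ∀ i < t, e i ∈ G.edges
  mem_left : ∀ i < t, v i ∈ e i
  mem_right : ∀ i < t, v (i + 1) ∈ e i
  injOn_vertex : Set.InjOn v (Set.Iic t)
  injOn_edge : Set.InjOn e (Set.Iio t)

namespace IsPath_s18

variable {v : ℕ → V} {e : ℕ → Finset V} {t : ℕ}

theorem length_le_card_s18 (p : G.IsPath_s18 v e t) : t ≤ G.edges.card := by
  simpa using Finset.card_le_card_of_injOn (s := Finset.range t) e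
    (fun i hi => p.edge_mem i (by simpa using hi))
    (fun i hi j hj h => p.injOn_edge (by simpa using hi) (by simpa using hj) h)

theorem drop (p : G.IsPath_s18 v e t) {j : ℕ} (hj : j ≤ t) :
    G.IsPath_s18 (fun i => v (j + i)) (fun i => e (j + i)) (t - j) where
  edge_mem i hi := p.edge_mem _ (by omega)
  mem_left i hi := p.mem_left _ (by omega)
  mem_right i hi := p.mem_right _ (by omega)
  injOn_vertex i hi i' hi' h := by
    simp only [Set.mem_Iic] at hi hi'
    have := p.injOn_vertex (by simp; omega) (by simp; omega) h
    omega
  injOn_edge i hi i' hi' h := by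
    simp only [Set.mem_Iio] at hi hi'
    have := p.injOn_edge (by simp; omega) (by simp; omega) h
    omega

theorem hasCycle_s18 (p : G.IsPath_s18 v e t) (ht : 1 ≤ t) {f : Finset V} (hf : f ∈ G.edges)
    (hfe : ∀ i < t, e i ≠ f) (h0 : v 0 ∈ f) (hlast : v t ∈ f) : G.HasCycle := by
  have hv : Set.EqOn v (Function.update v (t + 1) (v 0)) (Set.Iio (t + 1)) := fun i hi =>
    (Function.update_of_ne (ne_of_lt hi) _ _).symm
  refine hasCycle_of_injOn (t := t + 1) (v := Function.update v (t + 1) (v 0))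
    (e := Function.update e t f) (by omega) (fun i hi => ?_) (fun i hi => ?_) (fun i hi => ?_)
    (by simp) ?_ ?_
  · rcases (by omega : i < t ∨ i = t) with hi | rfl
    · simpa [hi.ne] using p.edge_mem i hi
    · simpa using hf
  · rcases (by omega : i < t ∨ i = t) with hi | rfl
    · simpa [Function.update_of_ne (by omega : i ≠ t + 1), hi.ne] using p.mem_left i hi
    · simpa using hlast
  · rcases (by omega : i < t ∨ i = t) with hi | rfl
    · simpa [hi.ne] using p.mem_right i hi
    · simpa using h0
  · refine Set.InjOn.congr ?_ hv
    simpa [Set.Iio_add_one_eq_Iic] using p.injOn_vertex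
  · exact p.injOn_edge.update_Iio_add_one hfe

theorem extend (p : G.IsPath_s18 v e t) {f : Finset V} (hf : f ∈ G.edges)
    (hfe : ∀ i < t, e i ≠ f) (hlast : v t ∈ f) {y : V} (hy : y ∈ f) (hyv : ∀ i ≤ t, v i ≠ y) :
    G.IsPath_s18 (Function.update v (t + 1) y) (Function.update e t f) (t + 1) where
  edge_mem i hi := by
    rcases (by omega : i < t ∨ i = t) with hi | rfl
    · simpa [hi.ne] using p.edge_mem i hi
    · simpa using hf
  mem_left i hi := by
    rcases (by omega : i < t ∨ i = t) with hi | rfl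
    · simpa [Function.update_of_ne (by omega : i ≠ t + 1), hi.ne] using p.mem_left i hi
    · simpa using hlast
  mem_right i hi := by
    rcases (by omega : i < t ∨ i = t) with hi | rfl
    · simpa [hi.ne] using p.mem_right i hi
    · simpa using hy
  injOn_vertex := by
    have hv := p.injOn_vertex
    rw [← Set.Iio_add_one_eq_Iic] at hv ⊢
    exact hv.update_Iio_add_one fun i hi => hyv i (by omega)
  injOn_edge := p.injOn_edge.update_Iio_add_one hfe

theorem exists_extend (hm : 2 ≤ m) (hG : ¬G.HasCycle)
    (hshared : ∀ e ∈ G.edges, ∀ w ∈ e, ∃ f ∈ G.edges, w ∈ f ∧ f ≠ e)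
    (p : G.IsPath_s18 v e t) (ht : 1 ≤ t) :
    ∃ (v' : ℕ → V) (e' : ℕ → Finset V), G.IsPath_s18 v' e' (t + 1) := by
  obtain ⟨f, hf, hlast, hfe⟩ := hshared (e (t - 1)) (p.edge_mem _ (by omega)) (v t)
    (by simpa [Nat.sub_add_cancel ht] using p.mem_right (t - 1) (by omega))
  by_cases hf_on : ∃ j < t, e j = f
  · -- the part of the path after `e j` closes up through `e j`
    obtain ⟨j, hj, rfl⟩ := hf_on
    have hjt : j + 1 < t := by
      by_contra
      exact hfe (congrArg e (by omega))
    refine absurd ((p.drop (j := j + 1) (by omega)).hasCycle_s18 (by omega) (p.edge_mem j hj)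
      (fun i hi h => ?_) (by simpa using p.mem_right j hj) (by simpa [hjt.le] using hlast)) hG
    have := p.injOn_edge (Set.mem_Iio.2 (by omega)) (Set.mem_Iio.2 hj) h
    omega
  push Not at hf_on
  obtain ⟨y, hy, hyt⟩ := Finset.exists_mem_ne (by rw [G.uniform f hf]; omega) (v t)
  by_cases hy_on : ∃ j ≤ t, v j = y
  · -- the part of the path from `v j` closes up through `f`
    obtain ⟨j, hj, rfl⟩ := hy_on
    have hjt : j < t := lt_of_le_of_ne hj fun h => hyt (h ▸ rfl)
    exact absurd ((p.drop hj).hasCycle_s18 (by omega) hf (fun i _ => hf_on _ (by omega))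
      (by simpa using hy) (by simpa [Nat.add_sub_cancel' hj] using hlast)) hG
  push Not at hy_on
  exact ⟨_, _, p.extend hf hf_on hlast hy hy_on⟩

end IsPath_s18

theorem isPath_zero (x : V) (e : ℕ → Finset V) : G.IsPath_s18 (fun _ => x) e 0 where
  edge_mem _ h := absurd h (Nat.not_lt_zero _)
  mem_left _ h := absurd h (Nat.not_lt_zero _)
  mem_right _ h := absurd h (Nat.not_lt_zero _)
  injOn_vertex i hi j hj _ := by simp_all
  injOn_edge _ h := absurd h (Nat.not_lt_zero _)

theorem exists_isPath_one_s18 (hm : 2 ≤ m) (hne : G.edges.Nonempty) :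
    ∃ (v : ℕ → V) (e : ℕ → Finset V), G.IsPath_s18 v e 1 := by
  obtain ⟨f, hf⟩ := hne
  obtain ⟨x, hx⟩ := Finset.card_pos.1 (by rw [G.uniform f hf]; omega)
  obtain ⟨y, hy, hyx⟩ := Finset.exists_mem_ne (by rw [G.uniform f hf]; omega) x
  exact ⟨_, _, (isPath_zero x fun _ => f).extend hf (fun _ h => absurd h (Nat.not_lt_zero _)) hx
    hy fun _ _ => hyx.symm⟩

theorem exists_private_vertex (hm : 2 ≤ m) (hG : ¬G.HasCycle) (hne : G.edges.Nonempty) :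
    ∃ e ∈ G.edges, ∃ w ∈ e, ∀ f ∈ G.edges, w ∈ f → f = e := by
  by_contra! hshared
  have hpath (t : ℕ) : ∃ (v : ℕ → V) (e : ℕ → Finset V), G.IsPath_s18 v e (t + 1) := by
    induction t with
    | zero => exact exists_isPath_one_s18 hm hne
    | succ t ih =>
      obtain ⟨v, e, p⟩ := ih
      exact p.exists_extend hm hG hshared (by omega)
  obtain ⟨v, e, p⟩ := hpath G.edges.card
  have := p.length_le_card_s18
  omega

theorem exists_sum_eq_of_not_hasCycle {R : Type*} [AddCommGroup R] (hm : 2 ≤ m) (G : HG m V)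
    (hG : ¬G.HasCycle) (c : R) : ∃ φ : V → R, ∀ e ∈ G.edges, ∑ v ∈ e, φ v = c := by
  classical
  rcases G.edges.eq_empty_or_nonempty with h | hne
  · exact ⟨0, by simp [h]⟩
  obtain ⟨e, he, w, hw, hpriv⟩ := exists_private_vertex hm hG hne
  obtain ⟨φ, hφ⟩ :=
    exists_sum_eq_of_not_hasCycle hm (G.eraseEdge e) (fun h => hG h.of_eraseEdge) c
  refine ⟨Function.update φ w (c - ∑ v ∈ e.erase w, φ v), fun f hf => ?_⟩
  by_cases hfe : f = e
  · subst hfe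
    rw [Finset.sum_update_of_mem hw, Finset.sdiff_singleton_eq_erase]
    abel
  · have hwf : w ∉ f := fun h => hfe (hpriv f hf h)
    rw [Finset.sum_congr rfl fun x hx => Function.update_of_ne (ne_of_mem_of_not_mem hx hwf) _ _]
    exact hφ f (Finset.mem_erase.2 ⟨hfe, hf⟩)
termination_by G.edges.card
decreasing_by classical exact Finset.card_erase_lt_of_mem he

theorem cyclicIndex_eq_of_sum_eq_one (hm : 0 < m) {φ : V → ZMod m}
    (hφ : ∀ e ∈ G.edges, ∑ v ∈ e, φ v = 1) : G.cyclicIndex = m := by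
  refine IsGreatest.csSup_eq ⟨⟨dvd_rfl, φ, ?_⟩, fun ℓ hℓ => Nat.le_of_dvd hm hℓ.1⟩
  simpa [Nat.div_self hm] using hφ

end HG

theorem cyclicIndex_hypertree_general (m : ℕ) (hm : 2 ≤ m) {V : Type}
    (T : HG m V) (hacyc : ¬ T.HasCycle) :
    T.cyclicIndex = m ∧ ∃ φ : V → ZMod m, ∀ e ∈ T.edges, ∑ v ∈ e, φ v = 1 := by
  obtain ⟨φ, hφ⟩ := T.exists_sum_eq_of_not_hasCycle hm hacyc (1 : ZMod m)
  exact ⟨T.cyclicIndex_eq_of_sum_eq_one (by omega) hφ, φ, hφ⟩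

/-- **Cyclic index of a hypertree.** An `m`-uniform hypertree `T` (connected and acyclic)
has cyclic index `m`; that is, there is a vertex coloring `φ : V(T) → ZMod m` whose values
sum to `1` mod `m` on each edge. -/
theorem cyclicIndex_hypertree (m : ℕ) (hm : 2 ≤ m) {V : Type} [DecidableEq V] [Fintype V]
    (T : HG m V) (hconn : T.Connected) (hacyc : ¬ T.HasCycle) :
    T.cyclicIndex = m ∧ ∃ φ : V → ZMod m, ∀ e ∈ T.edges, ∑ v ∈ e, φ v = 1 :=
  cyclicIndex_hypertree_general m hm T hacyc
end
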